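/- Let K ≥ 2, let ψ₁,…,ψ_K ∈ ℝ, let e ∈ {0,1}^K be such that both S₀ = {k : e_k = 0} and S₁ = {k : e_k = 1} are nonempty with cardinalities n₀ ≥ 1 and n₁ ≥ 1, let k₁ = Σ_{i=1}^{K−1} |e_{i+1} − e_i| and k₂ = K − 1 − k₁, and let a₁, b₁, a₂, b₂ > 0. Then ∫₀¹ ∫₀^∞ ∫_ℝ ∫₀^∞ ∫_ℝ [∏_{k ∈ S₀} φ(ψ_k | μ₀, t₀)] [∏_{k ∈ S₁} φ(ψ_k | μ₁, t₁)] · (b₂^{a₂}/Γ(a₂)) t₀^{−a₂−1} e^{−b₂/t₀} · (b₂^{a₂}/Γ(a₂)) t₁^{−a₂−1} e^{−b₂/t₁} · q^{k₁}(1−q)^{k₂} · [Γ(a₁+b₁)/(Γ(a₁)Γ(b₁))] q^{a₁−1}(1−q)^{b₁−1} dμ₀ dt₀ dμ₁ dt₁ dq equals [Γ(a₁+k₁)Γ(b₁+k₂)/Γ(a₁+k₁+b₁+k₂)] · [Γ(a₁+b₁)/(Γ(a₁)Γ(b₁))] · ∏_{j ∈ {0,1}} { n_j^{−1/2} (2π)^{−(n_j−1)/2}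 (b₂^{a₂}/Γ(a₂)) Γ((n_j−1)/2 + a₂) [ (1/2)Σ_{k ∈ S_j} ψ_k² − (Σ_{k ∈ S_j} ψ_k)²/(2 n_j) + b₂ ]^{−((n_j−1)/2 + a₂)} }. -/
import Mathlib


open MeasureTheory

/-- Density of the Gaussian distribution with mean `μ` and variance `v`. -/
noncomputable def gaussPdf (μ v x : ℝ) : ℝ :=
  (2 * Real.pi * v) ^ (-(1 : ℝ) / 2) * Real.exp (-(x - μ) ^ 2 / (2 * v))

/-- The marginal-likelihood factor of one mixture component:
`m^{−1/2} (2π)^{−(m−1)/2} (b^a/Γ(a)) Γ((m−1)/2 + a) [½ s2 − s1²/(2m) + b]^{−((m−1)/2+a)}`,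
where `s2` is the sum of squared scores and `s1` the sum of scores of the component. -/
noncomputable def compFac (a b : ℝ) (m : ℕ) (s2 s1 : ℝ) : ℝ :=
  (m : ℝ) ^ (-(1 : ℝ) / 2) * (2 * Real.pi) ^ (-((m : ℝ) - 1) / 2) *
    (b ^ a / Real.Gamma a) * Real.Gamma (((m : ℝ) - 1) / 2 + a) *
    ((1 / 2) * s2 - s1 ^ 2 / (2 * (m : ℝ)) + b) ^ (-(((m : ℝ) - 1) / 2 + a))

lemma gauss_integral (S : Finset ℕ) (ψ : ℕ → ℝ) (hS : 0 < S.card) {t : ℝ} (ht : 0 < t) :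
    ∫ μ : ℝ, ∏ k ∈ S, gaussPdf μ t (ψ k)
      = (S.card : ℝ) ^ (-(1:ℝ)/2) * (2 * Real.pi * t) ^ (-((S.card:ℝ)-1)/2) *
        Real.exp (-((1/2) * (∑ k ∈ S, ψ k ^ 2) - (∑ k ∈ S, ψ k)^2 / (2 * S.card)) / t) := by
  set m : ℕ := S.card with hm
  have hmR : (0:ℝ) < (m:ℝ) := by exact_mod_cast hS
  set s1 : ℝ := ∑ k ∈ S, ψ k with hs1
  set s2 : ℝ := ∑ k ∈ S, ψ k ^ 2 with hs2
  set C : ℝ := (1/2) * s2 - s1^2 / (2*m) with hC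
  set P : ℝ := 2 * Real.pi * t with hP
  have hPpos : 0 < P := by positivity
  have hsum : ∀ μ : ℝ, ∑ k ∈ S, (ψ k - μ)^2 = s2 - 2*μ*s1 + m*μ^2 := by
    intro μ
    have : ∀ k ∈ S, (ψ k - μ)^2 = ψ k ^2 + (ψ k * (-2*μ) + μ^2) := fun k _ => by ring
    rw [Finset.sum_congr rfl this, Finset.sum_add_distrib, Finset.sum_add_distrib,
      ← Finset.sum_mul, Finset.sum_const, nsmul_eq_mul]
    ring
  have key : ∀ μ : ℝ, ∏ k ∈ S, gaussPdf μ t (ψ k)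
      = (P ^ (-(1:ℝ)/2)) ^ m * Real.exp (-C/t) *
        Real.exp (-((m:ℝ)/(2*t)) * (μ - s1/m)^2) := by
    intro μ
    unfold gaussPdf
    rw [Finset.prod_mul_distrib, Finset.prod_const, ← Real.exp_sum]
    have h1 : ∑ k ∈ S, -(ψ k - μ)^2 / (2*t) = -C/t + (-((m:ℝ)/(2*t)) * (μ - s1/m)^2) := by
      rw [show ∑ k ∈ S, -(ψ k - μ)^2 / (2*t) = -(∑ k ∈ S, (ψ k - μ)^2)/(2*t) by
        rw [← Finset.sum_neg_distrib, Finset.sum_div], hsum μ, hC]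
      field_simp
      ring
    rw [h1, Real.exp_add, ← mul_assoc]
  rw [integral_congr_ae (Filter.Eventually.of_forall key)]
  rw [integral_const_mul]
  rw [show (fun μ : ℝ => Real.exp (-((m:ℝ)/(2*t)) * (μ - s1/m)^2))
      = fun μ : ℝ => (fun x => Real.exp (-((m:ℝ)/(2*t)) * x^2)) (μ - s1/m) from rfl]
  rw [integral_sub_right_eq_self (fun x => Real.exp (-((m:ℝ)/(2*t)) * x^2)) (s1/(m:ℝ))]
  rw [integral_gaussian]
  rw [show Real.pi / ((m:ℝ)/(2*t)) = P / m by rw [hP]; field_simp]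
  rw [Real.sqrt_eq_rpow, Real.div_rpow hPpos.le hmR.le,
    show P ^ ((1:ℝ)/2) / (m:ℝ) ^ ((1:ℝ)/2) = P ^ ((1:ℝ)/2) * (m:ℝ) ^ (-((1:ℝ)/2)) by
      rw [Real.rpow_neg hmR.le, div_eq_mul_inv]]
  rw [show ((P ^ (-(1:ℝ)/2)) ^ m) = P ^ (-(m:ℝ)/2) by
    rw [← Real.rpow_natCast (P ^ (-(1:ℝ)/2)) m, ← Real.rpow_mul hPpos.le,
      show (-(1:ℝ)/2)*(m:ℝ) = -(m:ℝ)/2 by ring]]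
  rw [show P ^ (-(m:ℝ)/2) * Real.exp (-C/t) * (P ^ ((1:ℝ)/2) * (m:ℝ) ^ (-((1:ℝ)/2)))
      = ((m:ℝ) ^ (-((1:ℝ)/2)) * (P ^ (-(m:ℝ)/2) * P ^ ((1:ℝ)/2))) * Real.exp (-C/t) by ring]
  rw [← Real.rpow_add hPpos, show -(m:ℝ)/2 + 1/2 = -((m:ℝ)-1)/2 by ring]
  rw [show -((1:ℝ)/2) = -(1:ℝ)/2 by ring]


lemma invGamma_integral {α β : ℝ} (hα : 0 < α) (hβ : 0 < β) :
    ∫ t in Set.Ioi (0:ℝ), t ^ (-α - 1) * Real.exp (-β / t) = Real.Gamma α * β ^ (-α) := by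
  have h := MeasureTheory.integral_comp_rpow_Ioi
    (fun y => y ^ (α - 1) * Real.exp (-(β * y))) (p := -1) (by norm_num)
  have h2 : ∫ t in Set.Ioi (0:ℝ), t ^ (-α - 1) * Real.exp (-β / t)
      = ∫ y in Set.Ioi (0:ℝ), y ^ (α - 1) * Real.exp (-(β * y)) := by
    rw [← h]
    refine setIntegral_congr_fun measurableSet_Ioi (fun x hx => ?_)
    have hx0 : (0:ℝ) < x := hx
    simp only [smul_eq_mul, abs_neg, abs_one]
    rw [← Real.rpow_mul hx0.le, Real.rpow_neg_one, ← div_eq_mul_inv]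
    rw [show (-1:ℝ) * (α - 1) = 1 - α by ring]
    rw [show (-1:ℝ) - 1 = -2 by norm_num]
    rw [one_mul, ← mul_assoc, ← Real.rpow_add hx0,
      show (-2:ℝ) + (1 - α) = -α - 1 by ring, neg_div]
  rw [h2, Real.integral_rpow_mul_exp_neg_mul_Ioi hα hβ, one_div,
    ← Real.rpow_neg_one β, ← Real.rpow_mul hβ.le, neg_one_mul, mul_comm]

lemma compInt (ψ : ℕ → ℝ) (S : Finset ℕ) (hS : 0 < S.card) {a b : ℝ} (ha : 0 < a) (hb : 0 < b) :
    ∫ t in Set.Ioi (0:ℝ), (∫ μ : ℝ, ∏ k ∈ S, gaussPdf μ t (ψ k)) *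
        (b ^ a / Real.Gamma a * t ^ (-a - 1) * Real.exp (-b / t))
      = compFac a b S.card (∑ k ∈ S, ψ k ^ 2) (∑ k ∈ S, ψ k) := by
  set m : ℕ := S.card with hm
  have hmR : (0:ℝ) < (m:ℝ) := by exact_mod_cast hS
  set s1 : ℝ := ∑ k ∈ S, ψ k with hs1
  set s2 : ℝ := ∑ k ∈ S, ψ k ^ 2 with hs2
  set C : ℝ := (1/2) * s2 - s1^2 / (2*m) with hC
  have hCnn : 0 ≤ C := by
    have h := sq_sum_le_card_mul_sum_sq (s := S) (f := ψ)
    rw [hC, hs1, hs2, sub_nonneg, div_le_iff₀ (by positivity)]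
    push_cast at h ⊢
    nlinarith [h]
  set α : ℝ := ((m:ℝ) - 1)/2 + a with hα
  have hαpos : 0 < α := by
    have : (1:ℝ) ≤ (m:ℝ) := by exact_mod_cast hS
    rw [hα]; nlinarith
  have hβpos : 0 < C + b := by linarith
  have key : ∀ t ∈ Set.Ioi (0:ℝ),
      (∫ μ : ℝ, ∏ k ∈ S, gaussPdf μ t (ψ k)) *
        (b ^ a / Real.Gamma a * t ^ (-a - 1) * Real.exp (-b / t))
      = ((m:ℝ) ^ (-(1:ℝ)/2) * (2*Real.pi) ^ (-((m:ℝ)-1)/2) * (b ^ a / Real.Gamma a)) *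
        (t ^ (-α - 1) * Real.exp (-(C + b) / t)) := by
    intro t ht
    rw [gauss_integral S ψ hS ht]
    rw [Real.mul_rpow (by positivity) ht.le]
    rw [show (m:ℝ) ^ (-(1:ℝ)/2) * ((2*Real.pi) ^ (-((m:ℝ)-1)/2) * t ^ (-((m:ℝ)-1)/2)) *
          Real.exp (-C/t) * (b ^ a / Real.Gamma a * t ^ (-a-1) * Real.exp (-b/t))
        = ((m:ℝ) ^ (-(1:ℝ)/2) * (2*Real.pi) ^ (-((m:ℝ)-1)/2) * (b ^ a / Real.Gamma a)) *
          ((t ^ (-((m:ℝ)-1)/2) * t ^ (-a-1)) * (Real.exp (-C/t) * Real.exp (-b/t))) by ring]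
    rw [← Real.rpow_add ht, ← Real.exp_add,
      show -((m:ℝ)-1)/2 + (-a-1) = -α - 1 by rw [hα]; ring,
      show -C/t + -b/t = -(C+b)/t by ring]
  rw [setIntegral_congr_fun measurableSet_Ioi key, integral_const_mul,
    invGamma_integral hαpos hβpos]
  rw [compFac, ← hα, ← hC]
  ring

lemma real_beta {x y : ℝ} (hx : 0 < x) (hy : 0 < y) :
    ∫ q in (0:ℝ)..1, q ^ (x-1) * (1-q) ^ (y-1)
      = Real.Gamma x * Real.Gamma y / Real.Gamma (x+y) := by
  have h := Complex.Gamma_mul_Gamma_eq_betaIntegral (s := (x:ℂ)) (t := (y:ℂ))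
    (by simpa using hx) (by simpa using hy)
  have hB : Complex.betaIntegral x y
      = ((∫ q in (0:ℝ)..1, q ^ (x-1) * (1-q) ^ (y-1) : ℝ) : ℂ) := by
    rw [Complex.betaIntegral, ← intervalIntegral.integral_ofReal]
    refine intervalIntegral.integral_congr fun q hq => ?_
    rw [Set.uIcc_of_le zero_le_one] at hq
    rw [Complex.ofReal_mul, Complex.ofReal_cpow hq.1,
      Complex.ofReal_cpow (show (0:ℝ) ≤ 1 - q by linarith [hq.2])]
    push_cast
    rfl
  rw [hB] at h
  have hG : Complex.Gamma ((x:ℂ)+(y:ℂ)) = ((Real.Gamma (x+y) : ℝ) : ℂ) := by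
    rw [← Complex.ofReal_add, Complex.Gamma_ofReal]
  rw [Complex.Gamma_ofReal, Complex.Gamma_ofReal, hG, ← Complex.ofReal_mul,
    ← Complex.ofReal_mul, Complex.ofReal_inj] at h
  have hGpos : 0 < Real.Gamma (x+y) := Real.Gamma_pos_of_pos (by linarith)
  field_simp
  linarith [h]

lemma beta_nat_shift {x y : ℝ} (hx : 0 < x) (hy : 0 < y) (k l : ℕ) :
    ∫ q in (0:ℝ)..1, (q ^ k * (1-q) ^ l) * (q ^ (x-1) * (1-q) ^ (y-1))
      = Real.Gamma (x + k) * Real.Gamma (y + l) / Real.Gamma (x + k + (y + l)) := by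
  have hxk : (0:ℝ) < x + k := by positivity
  have hyl : (0:ℝ) < y + l := by positivity
  rw [← real_beta hxk hyl]
  rw [intervalIntegral.integral_of_le zero_le_one, intervalIntegral.integral_of_le zero_le_one,
    integral_Ioc_eq_integral_Ioo, integral_Ioc_eq_integral_Ioo]
  refine setIntegral_congr_fun measurableSet_Ioo fun q hq => ?_
  obtain ⟨h0, h1⟩ := hq
  have h1' : (0:ℝ) < 1 - q := by linarith
  rw [← Real.rpow_natCast q k, ← Real.rpow_natCast (1-q) l, mul_mul_mul_comm,
    ← Real.rpow_add h0, ← Real.rpow_add h1',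
    show (k:ℝ) + (x - 1) = x + k - 1 by ring,
    show (l:ℝ) + (y - 1) = y + l - 1 by ring]

/-- The explicit formula (posteq1) for the unnormalized marginal posterior
`π(e|ψ) ∝ (H) × (I) × (J)` of an edge-status configuration under the temporal prior,
obtained by integrating out `μ₀, σ₀², μ₁, σ₁²` and `q` from the two-component Gaussian
mixture model of ψ-scores. -/
theorem marginal_posterior_temporal_prior
    (K : ℕ) (hK : 2 ≤ K) (ψ : ℕ → ℝ) (e : ℕ → ℕ) (he : ∀ k < K, e k ≤ 1)
    (S₀ S₁ : Finset ℕ)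
    (hS₀ : S₀ = (Finset.range K).filter fun k => e k = 0)
    (hS₁ : S₁ = (Finset.range K).filter fun k => e k = 1)
    (n₀ n₁ : ℕ) (hn₀ : n₀ = S₀.card) (hn₁ : n₁ = S₁.card)
    (hn₀pos : 1 ≤ n₀) (hn₁pos : 1 ≤ n₁)
    (k₁ k₂ : ℕ)
    (hk₁ : k₁ = ∑ i ∈ Finset.range (K - 1), ((e (i + 1) : ℤ) - (e i : ℤ)).natAbs)
    (hk₂ : k₂ = K - 1 - k₁)
    (a₁ b₁ a₂ b₂ : ℝ) (ha₁ : 0 < a₁) (hb₁ : 0 < b₁) (ha₂ : 0 < a₂) (hb₂ : 0 < b₂) :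
    (∫ q in (0 : ℝ)..1, ∫ t₁ in Set.Ioi (0 : ℝ), ∫ μ₁ : ℝ,
        ∫ t₀ in Set.Ioi (0 : ℝ), ∫ μ₀ : ℝ,
        (∏ k ∈ S₀, gaussPdf μ₀ t₀ (ψ k)) * (∏ k ∈ S₁, gaussPdf μ₁ t₁ (ψ k)) *
          (b₂ ^ a₂ / Real.Gamma a₂ * t₀ ^ (-a₂ - 1) * Real.exp (-b₂ / t₀)) *
          (b₂ ^ a₂ / Real.Gamma a₂ * t₁ ^ (-a₂ - 1) * Real.exp (-b₂ / t₁)) *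
          (q ^ k₁ * (1 - q) ^ k₂) *
          (Real.Gamma (a₁ + b₁) / (Real.Gamma a₁ * Real.Gamma b₁) *
            q ^ (a₁ - 1) * (1 - q) ^ (b₁ - 1))) =
      Real.Gamma (a₁ + k₁) * Real.Gamma (b₁ + k₂) /
          Real.Gamma (a₁ + k₁ + b₁ + k₂) *
        (Real.Gamma (a₁ + b₁) / (Real.Gamma a₁ * Real.Gamma b₁)) *
        compFac a₂ b₂ n₀ (∑ k ∈ S₀, (ψ k) ^ 2) (∑ k ∈ S₀, ψ k) *
        compFac a₂ b₂ n₁ (∑ k ∈ S₁, (ψ k) ^ 2) (∑ k ∈ S₁, ψ k) := by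
  subst hn₀ hn₁
  have hc₀ : 0 < S₀.card := hn₀pos
  have hc₁ : 0 < S₁.card := hn₁pos
  set Cb := Real.Gamma (a₁ + b₁) / (Real.Gamma a₁ * Real.Gamma b₁) with hCb
  set D₀ := compFac a₂ b₂ S₀.card (∑ k ∈ S₀, (ψ k) ^ 2) (∑ k ∈ S₀, ψ k) with hD₀
  set D₁ := compFac a₂ b₂ S₁.card (∑ k ∈ S₁, (ψ k) ^ 2) (∑ k ∈ S₁, ψ k) with hD₁
  have hmain : ∀ q : ℝ,
      (∫ t₁ in Set.Ioi (0 : ℝ), ∫ μ₁ : ℝ, ∫ t₀ in Set.Ioi (0 : ℝ), ∫ μ₀ : ℝ,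
        (∏ k ∈ S₀, gaussPdf μ₀ t₀ (ψ k)) * (∏ k ∈ S₁, gaussPdf μ₁ t₁ (ψ k)) *
          (b₂ ^ a₂ / Real.Gamma a₂ * t₀ ^ (-a₂ - 1) * Real.exp (-b₂ / t₀)) *
          (b₂ ^ a₂ / Real.Gamma a₂ * t₁ ^ (-a₂ - 1) * Real.exp (-b₂ / t₁)) *
          (q ^ k₁ * (1 - q) ^ k₂) *
          (Cb * q ^ (a₁ - 1) * (1 - q) ^ (b₁ - 1)))
      = (D₀ * D₁ * Cb) * ((q ^ k₁ * (1 - q) ^ k₂) * (q ^ (a₁ - 1) * (1 - q) ^ (b₁ - 1))) := by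
    intro q
    have hB : ∀ t₁ μ₁ : ℝ,
        (∫ t₀ in Set.Ioi (0 : ℝ), ∫ μ₀ : ℝ,
          (∏ k ∈ S₀, gaussPdf μ₀ t₀ (ψ k)) * (∏ k ∈ S₁, gaussPdf μ₁ t₁ (ψ k)) *
            (b₂ ^ a₂ / Real.Gamma a₂ * t₀ ^ (-a₂ - 1) * Real.exp (-b₂ / t₀)) *
            (b₂ ^ a₂ / Real.Gamma a₂ * t₁ ^ (-a₂ - 1) * Real.exp (-b₂ / t₁)) *
            (q ^ k₁ * (1 - q) ^ k₂) *
            (Cb * q ^ (a₁ - 1) * (1 - q) ^ (b₁ - 1)))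
        = D₀ * ((∏ k ∈ S₁, gaussPdf μ₁ t₁ (ψ k)) *
            (b₂ ^ a₂ / Real.Gamma a₂ * t₁ ^ (-a₂ - 1) * Real.exp (-b₂ / t₁)) *
            ((q ^ k₁ * (1 - q) ^ k₂) *
              (Cb * q ^ (a₁ - 1) * (1 - q) ^ (b₁ - 1)))) := by
      intro t₁ μ₁
      have hA : ∀ t₀ : ℝ,
          (∫ μ₀ : ℝ,
            (∏ k ∈ S₀, gaussPdf μ₀ t₀ (ψ k)) * (∏ k ∈ S₁, gaussPdf μ₁ t₁ (ψ k)) *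
              (b₂ ^ a₂ / Real.Gamma a₂ * t₀ ^ (-a₂ - 1) * Real.exp (-b₂ / t₀)) *
              (b₂ ^ a₂ / Real.Gamma a₂ * t₁ ^ (-a₂ - 1) * Real.exp (-b₂ / t₁)) *
              (q ^ k₁ * (1 - q) ^ k₂) *
              (Cb * q ^ (a₁ - 1) * (1 - q) ^ (b₁ - 1)))
          = ((∫ μ₀ : ℝ, ∏ k ∈ S₀, gaussPdf μ₀ t₀ (ψ k)) *
              (b₂ ^ a₂ / Real.Gamma a₂ * t₀ ^ (-a₂ - 1) * Real.exp (-b₂ / t₀))) *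
            ((∏ k ∈ S₁, gaussPdf μ₁ t₁ (ψ k)) *
              (b₂ ^ a₂ / Real.Gamma a₂ * t₁ ^ (-a₂ - 1) * Real.exp (-b₂ / t₁)) *
              ((q ^ k₁ * (1 - q) ^ k₂) *
                (Cb * q ^ (a₁ - 1) * (1 - q) ^ (b₁ - 1)))) := by
        intro t₀
        rw [show (fun μ₀ : ℝ =>
            (∏ k ∈ S₀, gaussPdf μ₀ t₀ (ψ k)) * (∏ k ∈ S₁, gaussPdf μ₁ t₁ (ψ k)) *
              (b₂ ^ a₂ / Real.Gamma a₂ * t₀ ^ (-a₂ - 1) * Real.exp (-b₂ / t₀)) *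
              (b₂ ^ a₂ / Real.Gamma a₂ * t₁ ^ (-a₂ - 1) * Real.exp (-b₂ / t₁)) *
              (q ^ k₁ * (1 - q) ^ k₂) *
              (Cb * q ^ (a₁ - 1) * (1 - q) ^ (b₁ - 1)))
          = fun μ₀ : ℝ => (∏ k ∈ S₀, gaussPdf μ₀ t₀ (ψ k)) *
              ((b₂ ^ a₂ / Real.Gamma a₂ * t₀ ^ (-a₂ - 1) * Real.exp (-b₂ / t₀)) *
                ((∏ k ∈ S₁, gaussPdf μ₁ t₁ (ψ k)) *
                  (b₂ ^ a₂ / Real.Gamma a₂ * t₁ ^ (-a₂ - 1) * Real.exp (-b₂ / t₁)) *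
                  ((q ^ k₁ * (1 - q) ^ k₂) *
                    (Cb * q ^ (a₁ - 1) * (1 - q) ^ (b₁ - 1)))))
          from funext fun μ₀ => by ring]
        rw [integral_mul_const]
        ring
      rw [show (fun t₀ : ℝ => ∫ μ₀ : ℝ,
            (∏ k ∈ S₀, gaussPdf μ₀ t₀ (ψ k)) * (∏ k ∈ S₁, gaussPdf μ₁ t₁ (ψ k)) *
              (b₂ ^ a₂ / Real.Gamma a₂ * t₀ ^ (-a₂ - 1) * Real.exp (-b₂ / t₀)) *
              (b₂ ^ a₂ / Real.Gamma a₂ * t₁ ^ (-a₂ - 1) * Real.exp (-b₂ / t₁)) *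
              (q ^ k₁ * (1 - q) ^ k₂) *
              (Cb * q ^ (a₁ - 1) * (1 - q) ^ (b₁ - 1)))
          = fun t₀ : ℝ => ((∫ μ₀ : ℝ, ∏ k ∈ S₀, gaussPdf μ₀ t₀ (ψ k)) *
              (b₂ ^ a₂ / Real.Gamma a₂ * t₀ ^ (-a₂ - 1) * Real.exp (-b₂ / t₀))) *
            ((∏ k ∈ S₁, gaussPdf μ₁ t₁ (ψ k)) *
              (b₂ ^ a₂ / Real.Gamma a₂ * t₁ ^ (-a₂ - 1) * Real.exp (-b₂ / t₁)) *
              ((q ^ k₁ * (1 - q) ^ k₂) *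
                (Cb * q ^ (a₁ - 1) * (1 - q) ^ (b₁ - 1))))
          from funext hA]
      rw [integral_mul_const, compInt ψ S₀ hc₀ ha₂ hb₂, ← hD₀]
    have hC : ∀ t₁ : ℝ,
        (∫ μ₁ : ℝ, ∫ t₀ in Set.Ioi (0 : ℝ), ∫ μ₀ : ℝ,
          (∏ k ∈ S₀, gaussPdf μ₀ t₀ (ψ k)) * (∏ k ∈ S₁, gaussPdf μ₁ t₁ (ψ k)) *
            (b₂ ^ a₂ / Real.Gamma a₂ * t₀ ^ (-a₂ - 1) * Real.exp (-b₂ / t₀)) *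
            (b₂ ^ a₂ / Real.Gamma a₂ * t₁ ^ (-a₂ - 1) * Real.exp (-b₂ / t₁)) *
            (q ^ k₁ * (1 - q) ^ k₂) *
            (Cb * q ^ (a₁ - 1) * (1 - q) ^ (b₁ - 1)))
        = ((∫ μ₁ : ℝ, ∏ k ∈ S₁, gaussPdf μ₁ t₁ (ψ k)) *
            (b₂ ^ a₂ / Real.Gamma a₂ * t₁ ^ (-a₂ - 1) * Real.exp (-b₂ / t₁))) *
          (D₀ * ((q ^ k₁ * (1 - q) ^ k₂) *
            (Cb * q ^ (a₁ - 1) * (1 - q) ^ (b₁ - 1)))) := by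
      intro t₁
      rw [show (fun μ₁ : ℝ => ∫ t₀ in Set.Ioi (0 : ℝ), ∫ μ₀ : ℝ,
            (∏ k ∈ S₀, gaussPdf μ₀ t₀ (ψ k)) * (∏ k ∈ S₁, gaussPdf μ₁ t₁ (ψ k)) *
              (b₂ ^ a₂ / Real.Gamma a₂ * t₀ ^ (-a₂ - 1) * Real.exp (-b₂ / t₀)) *
              (b₂ ^ a₂ / Real.Gamma a₂ * t₁ ^ (-a₂ - 1) * Real.exp (-b₂ / t₁)) *
              (q ^ k₁ * (1 - q) ^ k₂) *
              (Cb * q ^ (a₁ - 1) * (1 - q) ^ (b₁ - 1)))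
          = fun μ₁ : ℝ => (∏ k ∈ S₁, gaussPdf μ₁ t₁ (ψ k)) *
              ((b₂ ^ a₂ / Real.Gamma a₂ * t₁ ^ (-a₂ - 1) * Real.exp (-b₂ / t₁)) *
                (D₀ * ((q ^ k₁ * (1 - q) ^ k₂) *
                  (Cb * q ^ (a₁ - 1) * (1 - q) ^ (b₁ - 1)))))
          from funext fun μ₁ => by rw [hB t₁ μ₁]; ring]
      rw [integral_mul_const]
      ring
    rw [show (fun t₁ : ℝ => ∫ μ₁ : ℝ, ∫ t₀ in Set.Ioi (0 : ℝ), ∫ μ₀ : ℝ,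
          (∏ k ∈ S₀, gaussPdf μ₀ t₀ (ψ k)) * (∏ k ∈ S₁, gaussPdf μ₁ t₁ (ψ k)) *
            (b₂ ^ a₂ / Real.Gamma a₂ * t₀ ^ (-a₂ - 1) * Real.exp (-b₂ / t₀)) *
            (b₂ ^ a₂ / Real.Gamma a₂ * t₁ ^ (-a₂ - 1) * Real.exp (-b₂ / t₁)) *
            (q ^ k₁ * (1 - q) ^ k₂) *
            (Cb * q ^ (a₁ - 1) * (1 - q) ^ (b₁ - 1)))
        = fun t₁ : ℝ => ((∫ μ₁ : ℝ, ∏ k ∈ S₁, gaussPdf μ₁ t₁ (ψ k)) *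
            (b₂ ^ a₂ / Real.Gamma a₂ * t₁ ^ (-a₂ - 1) * Real.exp (-b₂ / t₁))) *
          (D₀ * ((q ^ k₁ * (1 - q) ^ k₂) *
            (Cb * q ^ (a₁ - 1) * (1 - q) ^ (b₁ - 1))))
        from funext hC]
    rw [integral_mul_const, compInt ψ S₁ hc₁ ha₂ hb₂, ← hD₁]
    ring
  rw [show (fun q : ℝ => ∫ t₁ in Set.Ioi (0 : ℝ), ∫ μ₁ : ℝ,
        ∫ t₀ in Set.Ioi (0 : ℝ), ∫ μ₀ : ℝ,
        (∏ k ∈ S₀, gaussPdf μ₀ t₀ (ψ k)) * (∏ k ∈ S₁, gaussPdf μ₁ t₁ (ψ k)) *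
          (b₂ ^ a₂ / Real.Gamma a₂ * t₀ ^ (-a₂ - 1) * Real.exp (-b₂ / t₀)) *
          (b₂ ^ a₂ / Real.Gamma a₂ * t₁ ^ (-a₂ - 1) * Real.exp (-b₂ / t₁)) *
          (q ^ k₁ * (1 - q) ^ k₂) *
          (Cb * q ^ (a₁ - 1) * (1 - q) ^ (b₁ - 1)))
      = fun q : ℝ => (D₀ * D₁ * Cb) *
          ((q ^ k₁ * (1 - q) ^ k₂) * (q ^ (a₁ - 1) * (1 - q) ^ (b₁ - 1)))
      from funext hmain]
  rw [intervalIntegral.integral_const_mul, beta_nat_shift ha₁ hb₁ k₁ k₂,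
    show a₁ + (k₁:ℝ) + (b₁ + (k₂:ℝ)) = a₁ + k₁ + b₁ + k₂ by ring]
  ring
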